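/- arXiv:math/0403455 — 7 statements merged into one kernel-verified Lean document; each statement's English description precedes it below -/
import Mathlib

section
/- Let R be a commutative ring and J an ideal of R. For i ≥ 1 define K^i = {A ∈ GL_n(R) : A ≡ I_n mod J^i}. Then [K^i, K^j] ⊆ K^{i+j} for all i, j ≥ 1; in particular K^1 ⊇ K^2 ⊇ ... is a central filtration. -/
/-!
For units `A, B` of a ring, `ABA⁻¹B⁻¹ - 1 = (AB - BA)A⁻¹B⁻¹` and
`AB - BA = (A - 1)(B - 1) - (B - 1)(A - 1)`. If the entries of `A - 1` lie in `I` and those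
of `B - 1` in `I'`, the entries of the right-hand side lie in `I * I'`; take `I = J^i`, `I' = J^j`.
-/

open Matrix

/-- The congruence subgroup of `GL n R` of level `I`: invertible matrices congruent to the
identity modulo the ideal `I` (every entry of `A - 1` lies in `I`). -/
def congruenceSubgroup (R : Type) [CommRing R] (n : ℕ) (I : Ideal R) :
    Subgroup (GL (Fin n) R) :=
  Subgroup.copy
    (MonoidHom.ker (Units.map ((Ideal.Quotient.mk I).mapMatrix.toMonoidHom)))
    {A | ∀ k l, (A : Matrix (Fin n) (Fin n) R) k l - (1 : Matrix (Fin n) (Fin n) R) k l ∈ I}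
    (by
      ext A
      simp only [Set.mem_setOf_eq, SetLike.mem_coe, MonoidHom.mem_ker, Units.ext_iff,
        Units.coe_map, RingHom.toMonoidHom_eq_coe, MonoidHom.coe_coe, Units.val_one]
      rw [← Matrix.ext_iff]
      refine forall₂_congr fun k l => ?_
      rw [RingHom.mapMatrix_apply, Matrix.map_apply,
        show (1 : Matrix (Fin n) (Fin n) (R ⧸ I)) k l
            = Ideal.Quotient.mk I ((1 : Matrix (Fin n) (Fin n) R) k l) from by
          by_cases h : k = l <;> simp [Matrix.one_apply, h],
        Ideal.Quotient.mk_eq_mk_iff_sub_mem])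

open scoped commutatorElement

theorem Units.val_commutatorElement_sub_one {S : Type*} [Ring S] (a b : Sˣ) :
    ((⁅a, b⁆ : Sˣ) : S) - 1 = (a * b - b * a) * ↑a⁻¹ * ↑b⁻¹ := by
  simp only [commutatorElement_def, Units.val_mul, sub_mul, mul_assoc, Units.mul_inv, one_mul]

namespace Matrix

variable {R ι : Type*} [CommRing R] [Fintype ι] {I I' : Ideal R} {M N : Matrix ι ι R}

theorem mul_apply_mem_of_left (hM : ∀ k l, M k l ∈ I) (N : Matrix ι ι R) (k l : ι) :
    (M * N) k l ∈ I :=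
  Ideal.sum_mem _ fun m _ => Ideal.mul_mem_right _ _ (hM k m)

theorem mul_apply_mem_mul (hM : ∀ k l, M k l ∈ I) (hN : ∀ k l, N k l ∈ I') (k l : ι) :
    (M * N) k l ∈ I * I' :=
  Ideal.sum_mem _ fun m _ => Ideal.mul_mem_mul (hM k m) (hN m l)

theorem mul_sub_mul_apply_mem_mul [DecidableEq ι] (hM : ∀ k l, (M - 1) k l ∈ I)
    (hN : ∀ k l, (N - 1) k l ∈ I') (k l : ι) : (M * N - N * M) k l ∈ I * I' := by
  have hcomm : M * N - N * M = (M - 1) * (N - 1) - (N - 1) * (M - 1) := by noncomm_ring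
  rw [hcomm, sub_apply]
  exact Ideal.sub_mem _ (mul_apply_mem_mul hM hN k l)
    (mul_comm I I' ▸ mul_apply_mem_mul hN hM k l)

end Matrix

section congruenceSubgroup

variable {R : Type} [CommRing R] {n : ℕ}

theorem mem_congruenceSubgroup {I : Ideal R} {A : GL (Fin n) R} :
    A ∈ congruenceSubgroup R n I ↔ ∀ k l, ((A : Matrix (Fin n) (Fin n) R) - 1) k l ∈ I :=
  Iff.rfl

theorem congruenceSubgroup_mono {I I' : Ideal R} (h : I ≤ I') :
    congruenceSubgroup R n I ≤ congruenceSubgroup R n I' :=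
  fun _ hA k l => h (hA k l)

theorem commutatorElement_mem_congruenceSubgroup_mul {I I' : Ideal R} {A B : GL (Fin n) R}
    (hA : A ∈ congruenceSubgroup R n I) (hB : B ∈ congruenceSubgroup R n I') :
    ⁅A, B⁆ ∈ congruenceSubgroup R n (I * I') := by
  rw [mem_congruenceSubgroup, Units.val_commutatorElement_sub_one, mul_assoc]
  exact mul_apply_mem_of_left (mul_sub_mul_apply_mem_mul hA hB) _

theorem commutator_congruenceSubgroup_le (I I' : Ideal R) :
    ⁅congruenceSubgroup R n I, congruenceSubgroup R n I'⁆ ≤ congruenceSubgroup R n (I * I') :=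
  Subgroup.commutator_le.mpr fun _ hA _ hB => commutatorElement_mem_congruenceSubgroup_mul hA hB

end congruenceSubgroup

/-- For a commutative ring `R`, an ideal `J` and `K^i = {A ∈ GL_n(R) : A ≡ 1 mod J^i}`,
we have `[K^i, K^j] ⊆ K^{i+j}` for all `i, j ≥ 1`; in particular the `K^i` form a
descending central filtration `K^1 ⊇ K^2 ⊇ ⋯`. -/
theorem congruence_filtration_central (R : Type) [CommRing R] (n : ℕ) (J : Ideal R) :
    (∀ i j : ℕ, 1 ≤ i → 1 ≤ j →
      ⁅congruenceSubgroup R n (J ^ i), congruenceSubgroup R n (J ^ j)⁆ ≤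
        congruenceSubgroup R n (J ^ (i + j))) ∧
    (∀ i : ℕ, 1 ≤ i → congruenceSubgroup R n (J ^ (i + 1)) ≤ congruenceSubgroup R n (J ^ i)) :=
  ⟨fun i j _ _ => pow_add J i j ▸ commutator_congruenceSubgroup_le _ _,
    fun i _ => congruenceSubgroup_mono (Ideal.pow_le_pow_right i.le_succ)⟩
end

section
/- In the Laurent polynomial ring R = ℤ[t₁^{±1},…,t_n^{±1}] with augmentation ideal J = ker(R → ℤ, t_i ↦ 1), for i > 1 and any matrix A ∈ GL_n(R) with A ≡ I_n mod J^i, the first-order term A_{(i)} ∈ M_n(J^i/J^{i+1}) has trace zero. -/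
/-- The Laurent polynomial ring `ℤ[t₁^{±1},…,t_n^{±1}]`, realized as the group ring
`ℤ[ℤⁿ]`. -/
abbrev LaurentMv (n : ℕ) : Type := AddMonoidAlgebra ℤ (Fin n →₀ ℤ)

/-- The variable `t_i` in `ℤ[t₁^{±1},…,t_n^{±1}]`. -/
noncomputable def tvar {n : ℕ} (i : Fin n) : LaurentMv n :=
  AddMonoidAlgebra.single (Finsupp.single i 1) 1

/-- The augmentation map `ℤ[t₁^{±1},…,t_n^{±1}] → ℤ`, `t_i ↦ 1`. -/
noncomputable def aug (n : ℕ) : LaurentMv n →+* ℤ :=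
  AddMonoidAlgebra.liftNCRingHom (RingHom.id ℤ) 1 (fun _ _ => Commute.one_right _)

/-- The augmentation ideal `J = ker(aug)` of `ℤ[t₁^{±1},…,t_n^{±1}]`. -/
noncomputable def augIdeal (n : ℕ) : Ideal (LaurentMv n) := RingHom.ker (aug n)

lemma tvar_sub_one_mem {n : ℕ} (i : Fin n) : tvar i - 1 ∈ augIdeal n := by
  have h1 : aug n (tvar i) = 1 := by
    simp [aug, tvar, AddMonoidAlgebra.liftNCRingHom, AddMonoidAlgebra.liftNC_single]
  simp [augIdeal, RingHom.mem_ker, map_sub, h1]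

open Matrix

/-!
The determinant of `A` is a unit of `ℤ[ℤⁿ]`, hence a monomial `± tᵃ`. Expanding the determinant,
`det A ≡ 1 + tr (A - 1) mod J^{2i}`, so `det A ≡ 1 mod J²`. The augmentation forces the sign `+`,
and since `tᵃ - 1 ≡ ∑ aⱼ (tⱼ - 1) mod J²` the exponent is `a = 0`: `det A = 1`. Hence
`tr (A - 1) ≡ 0 mod J^{2i} ⊆ J^{i+1}`.
-/

open Finset

namespace Ideal

variable {S : Type*} [CommRing S] {I : Ideal S}

theorem prod_one_add_sub_one_sub_sum_mem_sq {ι : Type*} (s : Finset ι) {b : ι → S}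
    (hb : ∀ k ∈ s, b k ∈ I) : ∏ k ∈ s, (1 + b k) - 1 - ∑ k ∈ s, b k ∈ I ^ 2 := by
  classical
  induction s using Finset.induction_on with
  | empty => simp
  | insert a s ha ih =>
    rw [Finset.forall_mem_insert] at hb
    have hprod : ∏ k ∈ s, (1 + b k) - 1 ∈ I := by
      simpa using add_mem (pow_le_self two_ne_zero (ih hb.2)) (sum_mem I hb.2)
    have key : (1 + b a) * ∏ k ∈ s, (1 + b k) - 1 - (b a + ∑ k ∈ s, b k)
        = (∏ k ∈ s, (1 + b k) - 1 - ∑ k ∈ s, b k) + b a * (∏ k ∈ s, (1 + b k) - 1) := by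
      ring
    rw [Finset.prod_insert ha, Finset.sum_insert ha, key]
    exact add_mem (ih hb.2) (pow_two I ▸ mul_mem_mul hb.1 hprod)

end Ideal

namespace Matrix

variable {S : Type*} [CommRing S] {I : Ideal S} {m : Type*} [DecidableEq m] [Fintype m]

theorem prod_perm_mem_sq_of_ne_one {M : Matrix m m S} (hM : ∀ k l, k ≠ l → M k l ∈ I)
    {σ : Equiv.Perm m} (hσ : σ ≠ 1) : ∏ k, M (σ k) k ∈ I ^ 2 := by
  have hsupp : ∏ k ∈ σ.support, M (σ k) k ∈ I ^ 2 := by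
    have := Ideal.prod_mem_prod (s := σ.support) (I := fun _ => I) (x := fun k => M (σ k) k)
      fun k hk => hM _ _ (Equiv.Perm.mem_support.mp hk)
    rw [Finset.prod_const] at this
    exact Ideal.pow_le_pow_right (Equiv.Perm.two_le_card_support_of_ne_one hσ) this
  rw [← Finset.prod_mul_prod_compl σ.support]
  exact Ideal.mul_mem_right _ _ hsupp

theorem det_one_add_sub_one_sub_trace_mem_sq {B : Matrix m m S} (hB : ∀ k l, B k l ∈ I) :
    det (1 + B) - 1 - trace B ∈ I ^ 2 := by
  have hdet : det (1 + B) = ∏ k, (1 + B k k)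
      + ∑ σ ∈ univ.erase 1, Equiv.Perm.sign σ • ∏ k, (1 + B) (σ k) k := by
    rw [det_apply, ← Finset.add_sum_erase _ _ (Finset.mem_univ 1)]
    simp
  have hoff : ∀ σ ∈ univ.erase (1 : Equiv.Perm m),
      Equiv.Perm.sign σ • ∏ k, (1 + B) (σ k) k ∈ I ^ 2 := fun σ hσ => by
    rw [Units.smul_def]
    refine zsmul_mem (prod_perm_mem_sq_of_ne_one (fun k l hkl => ?_) (ne_of_mem_erase hσ)) _
    simpa [one_apply_ne hkl] using hB k l
  rw [hdet, trace, add_sub_right_comm, add_sub_right_comm]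
  exact add_mem (Ideal.prod_one_add_sub_one_sub_sum_mem_sq univ fun k _ => hB k k)
    (Ideal.sum_mem _ hoff)

end Matrix

namespace AddMonoidAlgebra

theorem exists_eq_single_of_isUnit {R G : Type*} [Semiring R] [NoZeroDivisors R] [Nontrivial R]
    [AddMonoid G] [TwoUniqueSums G] {u : AddMonoidAlgebra R G} (hu : IsUnit u) :
    ∃ a r, u = single a r := by
  obtain ⟨v, huv⟩ := hu.exists_right_inv
  have hu0 : u.coeff.support.Nonempty := by simpa using left_ne_zero_of_mul_eq_one huv
  have hv0 : v.coeff.support.Nonempty := by simpa using right_ne_zero_of_mul_eq_one huv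
  suffices h : #u.coeff.support * #v.coeff.support ≤ 1 by
    have hcard : #u.coeff.support = 1 := by
      have := hu0.card_pos; have := hv0.card_pos; nlinarith
    obtain ⟨a, ha⟩ := Finset.card_eq_one.mp hcard
    exact ⟨a, u.coeff a, coeff_injective (Finsupp.support_eq_singleton.mp ha).2⟩
  by_contra! hlt
  obtain ⟨p, hp, q, hq, hpq, hup, huq⟩ := TwoUniqueSums.uniqueAdd_of_one_lt_card hlt
  -- The coefficient of `u * v = 1` at a uniquely attained sum is a product of nonzero
  -- coefficients, so every such sum is `0`.
  have hzero : ∀ p ∈ u.coeff.support ×ˢ v.coeff.support,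
      UniqueAdd u.coeff.support v.coeff.support p.1 p.2 → p.1 + p.2 = 0 := by
    intro p hp hup
    by_contra hne
    rw [Finset.mem_product, Finsupp.mem_support_iff, Finsupp.mem_support_iff] at hp
    have := coeff_mul_add_of_uniqueAdd hup
    rw [huv, one_def, coeff_single, Finsupp.single_eq_of_ne hne] at this
    exact mul_ne_zero hp.1 hp.2 this.symm
  have hqp := (hzero q hq huq).trans (hzero p hp hup).symm
  rw [Finset.mem_product] at hq
  exact hpq (Prod.ext (hup hq.1 hq.2 hqp).1 (hup hq.1 hq.2 hqp).2).symm

end AddMonoidAlgebra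

open AddMonoidAlgebra

theorem mem_augIdeal {n : ℕ} {x : LaurentMv n} : x ∈ augIdeal n ↔ aug n x = 0 := RingHom.mem_ker

@[simp]
theorem aug_single {n : ℕ} (a : Fin n →₀ ℤ) (r : ℤ) : aug n (single a r) = r := by
  simp [aug, liftNCRingHom, liftNC_single]

/-- `gradAtOne n x j` is `∂x/∂tⱼ` evaluated at `t = (1, …, 1)`. -/
noncomputable def gradAtOne (n : ℕ) : LaurentMv n →+ (Fin n →₀ ℤ) :=
  (Finsupp.liftAddHom fun a => zmultiplesHom _ a).comp coeffAddEquiv.toAddMonoidHom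

@[simp]
theorem gradAtOne_single {n : ℕ} (a : Fin n →₀ ℤ) (r : ℤ) :
    gradAtOne n (single a r) = r • a := by
  simp [gradAtOne]

theorem gradAtOne_mul {n : ℕ} (x y : LaurentMv n) :
    gradAtOne n (x * y) = aug n x • gradAtOne n y + aug n y • gradAtOne n x := by
  induction x using AddMonoidAlgebra.induction_linear with
  | zero => simp
  | add x x' hx hx' => simp only [add_mul, map_add, hx, hx', add_smul, smul_add]; abel
  | single a r =>
    induction y using AddMonoidAlgebra.induction_linear with
    | zero => simp
    | add y y' hy hy' => simp only [mul_add, map_add, hy, hy', add_smul, smul_add]; abel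
    | single b s => simp [single_mul_single, smul_add, smul_smul, mul_comm s r, add_comm]

theorem gradAtOne_eq_zero_of_mem_sq {n : ℕ} {x : LaurentMv n} (hx : x ∈ augIdeal n ^ 2) :
    gradAtOne n x = 0 := by
  rw [pow_two] at hx
  refine Submodule.mul_induction_on hx (fun p hp q hq => ?_) fun x y hx hy => ?_
  · simp [gradAtOne_mul, mem_augIdeal.mp hp, mem_augIdeal.mp hq]
  · rw [map_add, hx, hy, add_zero]

theorem eq_one_of_isUnit_of_sub_one_mem_sq {n : ℕ} {u : LaurentMv n} (hu : IsUnit u)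
    (h : u - 1 ∈ augIdeal n ^ 2) : u = 1 := by
  obtain ⟨a, r, rfl⟩ := exists_eq_single_of_isUnit hu
  obtain rfl : r = 1 := by
    simpa [mem_augIdeal, one_def, sub_eq_zero] using Ideal.pow_le_self two_ne_zero h
  obtain rfl : a = 0 := by simpa [one_def] using gradAtOne_eq_zero_of_mem_sq h
  rfl

/-- In `R = ℤ[t₁^{±1},…,t_n^{±1}]` with augmentation ideal `J`, for `i > 1` and any
`A ∈ GL_n(R)` with `A ≡ 1 mod J^i`, the leading term `A_{(i)} ∈ M_n(J^i/J^{i+1})` has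
trace zero. -/
theorem gassner_leading_term_trace_zero (n i : ℕ) (hi : 1 < i)
    (A : GL (Fin n) (LaurentMv n))
    (hA : ∀ k l, (A : Matrix (Fin n) (Fin n) (LaurentMv n)) k l
        - (1 : Matrix (Fin n) (Fin n) (LaurentMv n)) k l ∈ augIdeal n ^ i) :
    ∑ k : Fin n,
      (Submodule.Quotient.mk
        (⟨(A : Matrix (Fin n) (Fin n) (LaurentMv n)) k k
            - (1 : Matrix (Fin n) (Fin n) (LaurentMv n)) k k, hA k k⟩ : ↥(augIdeal n ^ i)) :
        ↥(augIdeal n ^ i) ⧸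
          Submodule.comap (augIdeal n ^ i).subtype (augIdeal n ^ (i + 1))) = 0 := by
  set M : Matrix (Fin n) (Fin n) (LaurentMv n) := ↑A
  have htrace : trace (M - 1) ∈ augIdeal n ^ i := Ideal.sum_mem _ fun k _ => hA k k
  have hexpand : det M - 1 - trace (M - 1) ∈ augIdeal n ^ (i + 1) := by
    have := det_one_add_sub_one_sub_trace_mem_sq (B := M - 1) hA
    rw [add_sub_cancel, ← pow_mul] at this
    exact Ideal.pow_le_pow_right (by omega) this
  have hdet : det M = 1 := by
    refine eq_one_of_isUnit_of_sub_one_mem_sq ((isUnit_iff_isUnit_det M).mp A.isUnit) ?_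
    have := add_mem (Ideal.pow_le_pow_right (by omega) hexpand) htrace
    rw [sub_add_cancel] at this
    exact Ideal.pow_le_pow_right hi this
  have htrace_succ : trace (M - 1) ∈ augIdeal n ^ (i + 1) := by
    simpa [hdet] using neg_mem hexpand
  simp only [← Submodule.mkQ_apply]
  rw [← map_sum, Submodule.mkQ_apply, Submodule.Quotient.mk_eq_zero, Submodule.mem_comap,
    map_sum]
  exact htrace_succ
end

section
/- For the augmentation ideal J of ℤ[t₁^{±1},…,t_n^{±1}], the quotient J^i/J^{i+1} is a free abelian group with basis the classes of the monomials (t_{ℓ₁}-1)⋯(t_{ℓ_i}-1) with 1 ≤ ℓ₁ ≤ ⋯ ≤ ℓ_i ≤ n. -/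
lemma prod_mem_pow {R : Type} [CommRing R] (J : Ideal R) :
    ∀ (i : ℕ) (f : Fin i → R), (∀ j, f j ∈ J) → ∏ j, f j ∈ J ^ i
  | 0, f, _ => by simp
  | (i + 1), f, hf => by
      rw [Fin.prod_univ_succ, pow_succ']
      exact Ideal.mul_mem_mul (hf 0) (prod_mem_pow J i _ (fun j => hf _))

/-! Modulo `J^{i+1}`, an element `r` acts on `J^i` as the integer `aug r`, because
`r - aug r ∈ J`. Hence `J^i/J^{i+1}` is spanned over `ℤ` by products of `i` generators `t_j - 1`,
and these commute, so they can be taken in nondecreasing order. For independence, map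
`t_j ↦ 1 + x_j` into `ℤ[x₁,…,xₙ]/(x₁,…,xₙ)^{i+1}`, where `1 + x_j` is a unit because `x_j` is
nilpotent. This ring map kills `J^{i+1}` and sends `(t_{ℓ₁}-1)⋯(t_{ℓ_i}-1)` to the monomial
`x_{ℓ₁}⋯x_{ℓ_i}`. Distinct monomials of degree `i` stay independent modulo degree `i+1`. -/

open MvPolynomial Pointwise

theorem exists_monotone_prod_eq_of_mem_range_pow {M ι : Type*} [CommMonoid M] [LinearOrder ι]
    {f : ι → M} {i : ℕ} {x : M} (hx : x ∈ Set.range f ^ i) :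
    ∃ ℓ : Fin i → ι, Monotone ℓ ∧ ∏ j, f (ℓ j) = x := by
  obtain ⟨g, rfl⟩ := Set.mem_pow.1 hx
  choose ℓ hℓ using fun j => (g j).2
  refine ⟨ℓ ∘ Tuple.sort ℓ, Tuple.monotone_sort ℓ, ?_⟩
  rw [List.prod_ofFn]
  simp only [Function.comp_apply, hℓ]
  exact Equiv.prod_comp (Tuple.sort ℓ) fun j => (g j : M)

theorem sum_single_one_injective_monotone {ι : Type*} [LinearOrder ι] {i : ℕ} :
    Function.Injective fun ℓ : {ℓ : Fin i → ι // Monotone ℓ} =>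
      ∑ j, Finsupp.single (ℓ.1 j) 1 := by
  intro ℓ ℓ' h
  have h' := congrArg Finsupp.toMultiset h
  simp only [Finsupp.toMultiset_sum, Finsupp.toMultiset_single, one_nsmul] at h'
  refine Subtype.ext (List.ofFn_injective (List.Perm.eq_of_sortedLE ℓ.2.sortedLE_ofFn
    ℓ'.2.sortedLE_ofFn (Multiset.coe_eq_coe.1 ?_)))
  have hofFn (ℓ : Fin i → ι) : ∑ j, ({ℓ j} : Multiset ι) = ↑(List.ofFn ℓ) := by
    rw [← Fin.univ_val_map, Finset.sum_eq_multiset_sum,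
      ← Multiset.sum_map_singleton (Finset.univ.val.map ℓ), Multiset.map_map]
    rfl
  rwa [hofFn, hofFn] at h'

theorem Submodule.restrictScalars_span_of_smul_eq {R M : Type*} [CommRing R] [AddCommGroup M]
    [Module R M] (ε : R →+* ℤ) (h : ∀ (r : R) (m : M), r • m = ε r • m) (T : Set M) :
    (span R T).restrictScalars ℤ = span ℤ T := by
  refine le_antisymm (fun x hx => ?_) (span_le_restrictScalars ℤ R T)
  let T' : Submodule R M :=
    { (span ℤ T).toAddSubmonoid with
      smul_mem' := fun r m hm => by rw [h]; exact (span ℤ T).smul_mem _ hm }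
  exact (span_le (p := T')).2 subset_span hx

namespace Ideal

variable {R : Type*} [CommRing R]

abbrev gradedPiece (I : Ideal R) (i : ℕ) : Type _ :=
  ↥(I ^ i) ⧸ Submodule.comap (I ^ i).subtype (I ^ (i + 1))

theorem gradedPiece_smul_eq_int_smul (ε : R →+* ℤ) (i : ℕ) (r : R)
    (x : (RingHom.ker ε).gradedPiece i) : r • x = ε r • x := by
  obtain ⟨x, rfl⟩ := Submodule.Quotient.mk_surjective _ x
  rw [← Submodule.Quotient.mk_smul, ← Submodule.Quotient.mk_smul, Submodule.Quotient.eq]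
  have hr : r - ε r ∈ RingHom.ker ε := by simp [RingHom.mem_ker]
  have := mul_mem_mul hr x.2
  rw [← pow_succ'] at this
  simpa [sub_mul, zsmul_eq_mul] using this

theorem span_image_mk_preimage_pow_eq_top {I : Ideal R} {S : Set R} (hS : span S = I) (i : ℕ) :
    Submodule.span R (Submodule.Quotient.mk '' ((↑) ⁻¹' (S ^ i) : Set ↥(I ^ i))) =
      (⊤ : Submodule R (I.gradedPiece i)) := by
  have htop : ∀ p : Submodule R R, p = Submodule.span R (S ^ i) →
      Submodule.span R ((↑) ⁻¹' (S ^ i) : Set p) = ⊤ := by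
    rintro _ rfl
    exact Submodule.span_span_coe_preimage
  change Submodule.span R (Submodule.mkQ _ '' _) = ⊤
  rw [Submodule.span_image, htop _ (hS ▸ Submodule.span_pow S i), Submodule.map_top,
    Submodule.range_mkQ]

theorem span_int_image_mk_preimage_pow_eq_top (ε : R →+* ℤ) {S : Set R}
    (hS : span S = RingHom.ker ε) (i : ℕ) :
    Submodule.span ℤ (Submodule.Quotient.mk '' ((↑) ⁻¹' (S ^ i) : Set ↥(RingHom.ker ε ^ i))) =
      (⊤ : Submodule ℤ ((RingHom.ker ε).gradedPiece i)) := by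
  rw [← Submodule.restrictScalars_span_of_smul_eq ε (gradedPiece_smul_eq_int_smul ε i),
    span_image_mk_preimage_pow_eq_top hS, Submodule.restrictScalars_top]

theorem linearIndependent_mk_of_ringHom {I : Ideal R} {i : ℕ} {A : Type*} [Ring A]
    (f : R →+* A) (hf : ∀ p ∈ I ^ (i + 1), f p = 0) {ι : Type*} {v : ι → ↥(I ^ i)}
    (hv : LinearIndependent ℤ fun a => f (v a)) :
    LinearIndependent ℤ fun a => (Submodule.Quotient.mk (v a) : I.gradedPiece i) := by
  let N := Submodule.comap (I ^ i).subtype (I ^ (i + 1))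
  let Φ : I.gradedPiece i →ₗ[ℤ] A :=
    ((N.restrictScalars ℤ).liftQ (f.toAddMonoidHom.toIntLinearMap ∘ₗ
      ((I ^ i).subtype.restrictScalars ℤ)) fun x hx => hf x hx) ∘ₗ
      (Submodule.Quotient.restrictScalarsEquiv ℤ N).symm.toLinearMap
  exact LinearIndependent.of_comp Φ hv

end Ideal

namespace MvPolynomial

variable {σ R : Type*} [CommRing R]

theorem isNilpotent_mk_X (k : ℕ) (j : σ) :
    IsNilpotent (Ideal.Quotient.mk (idealOfVars σ R ^ k) (X j)) :=
  ⟨k, by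
    rw [← map_pow, Ideal.Quotient.eq_zero_iff_mem]
    exact Ideal.pow_mem_pow (Ideal.subset_span (Set.mem_range_self j)) _⟩

theorem linearIndependent_mk_monomial {ι : Type*} {d : ι → σ →₀ ℕ} (hd : Function.Injective d)
    {k : ℕ} (hk : ∀ a, (d a).degree < k) :
    LinearIndependent R fun a => Ideal.Quotient.mk (idealOfVars σ R ^ k) (monomial (d a) 1) := by
  rw [linearIndependent_iff']
  intro s g hg a ha
  have hmem : ∑ b ∈ s, g b • monomial (d b) (1 : R) ∈ idealOfVars σ R ^ k := by
    rw [← Ideal.Quotient.eq_zero_iff_mem, ← hg, map_sum]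
    refine Finset.sum_congr rfl fun b _ => ?_
    rw [← Ideal.Quotient.mkₐ_eq_mk R, map_smul]
  have := (mem_pow_idealOfVars_iff' k _).1 hmem (d a) (hk a)
  classical
  simpa [coeff_sum, coeff_monomial, hd.eq_iff, ha] using this

end MvPolynomial

namespace LaurentMv

variable {n : ℕ}

theorem ringHom_ext {A : Type*} [Semiring A] {f g : LaurentMv n →+* A}
    (h : ∀ j, f (tvar j) = g (tvar j)) : f = g := by
  refine AddMonoidAlgebra.ringHom_ext' (RingHom.ext_int _ _) ?_
  ext j
  exact h j

noncomputable def lift {A : Type*} [CommRing A] (u : Fin n → Aˣ) : LaurentMv n →+* A :=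
  (AddMonoidAlgebra.lift ℤ A (Fin n →₀ ℤ) ((Units.coeHom A).comp
    (AddMonoidHom.toMultiplicativeLeft
      (Finsupp.liftAddHom fun j => zmultiplesHom _ (Additive.ofMul (u j)))))).toRingHom

theorem lift_tvar {A : Type*} [CommRing A] (u : Fin n → Aˣ) (j : Fin n) :
    lift u (tvar j) = u j := by
  simp [lift, tvar, AddMonoidAlgebra.lift_single, AddMonoidHom.toMultiplicativeLeft]

end LaurentMv

theorem aug_tvar {n : ℕ} (j : Fin n) : aug n (tvar j) = 1 := by
  simp [aug, tvar, AddMonoidAlgebra.liftNCRingHom, AddMonoidAlgebra.liftNC_single]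

theorem augIdeal_eq_span (n : ℕ) :
    augIdeal n = Ideal.span (Set.range fun j : Fin n => tvar j - 1) := by
  set K := Ideal.span (Set.range fun j : Fin n => tvar j - 1)
  refine le_antisymm (fun p hp => ?_)
    (Ideal.span_le.2 (Set.range_subset_iff.2 tvar_sub_one_mem))
  have hfactor : Ideal.Quotient.mk K = (Int.castRingHom _).comp (aug n) :=
    LaurentMv.ringHom_ext fun j => by
      rw [RingHom.comp_apply, aug_tvar, map_one, ← map_one (Ideal.Quotient.mk K),
        Ideal.Quotient.eq]
      exact Ideal.subset_span ⟨j, rfl⟩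
  rw [← Ideal.Quotient.eq_zero_iff_mem, hfactor, RingHom.comp_apply, RingHom.mem_ker.1 hp,
    map_zero]

section Magnus

variable (n i : ℕ)

noncomputable def magnusHom :
    LaurentMv n →+* MvPolynomial (Fin n) ℤ ⧸ idealOfVars (Fin n) ℤ ^ (i + 1) :=
  LaurentMv.lift fun j => (isNilpotent_mk_X (i + 1) j).isUnit_one_add.unit

variable {n i}

theorem magnusHom_tvar_sub_one (j : Fin n) :
    magnusHom n i (tvar j - 1) = Ideal.Quotient.mk _ (X j) := by
  rw [map_sub, map_one, magnusHom, LaurentMv.lift_tvar, IsUnit.unit_spec, add_sub_cancel_left]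

theorem magnusHom_prod_tvar_sub_one (ℓ : Fin i → Fin n) :
    magnusHom n i (∏ j, (tvar (ℓ j) - 1)) =
      Ideal.Quotient.mk _ (monomial (∑ j, Finsupp.single (ℓ j) 1) 1) := by
  simp only [map_prod, magnusHom_tvar_sub_one, monomial_sum_one]
  rfl

theorem magnusHom_eq_zero_of_mem {p : LaurentMv n} (hp : p ∈ augIdeal n ^ (i + 1)) :
    magnusHom n i p = 0 := by
  have hJ : (augIdeal n).map (magnusHom n i) ≤
      (idealOfVars (Fin n) ℤ).map (Ideal.Quotient.mk _) := by
    rw [augIdeal_eq_span, Ideal.map_span, Ideal.span_le]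
    rintro _ ⟨_, ⟨j, rfl⟩, rfl⟩
    rw [magnusHom_tvar_sub_one]
    exact Ideal.mem_map_of_mem _ (Ideal.subset_span (Set.mem_range_self j))
  have h := Ideal.pow_right_mono hJ (i + 1)
  rw [← Ideal.map_pow, ← Ideal.map_pow, Ideal.map_quotient_self] at h
  exact (Submodule.mem_bot _).1 (h (Ideal.mem_map_of_mem _ hp))

end Magnus

theorem linearIndependent_mk_prod_tvar_sub_one (n i : ℕ) :
    LinearIndependent ℤ fun ℓ : {ℓ : Fin i → Fin n // Monotone ℓ} =>
      (Submodule.Quotient.mk ⟨∏ j, (tvar (ℓ.1 j) - 1),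
        prod_mem_pow (augIdeal n) i _ fun j => tvar_sub_one_mem (ℓ.1 j)⟩ :
        (augIdeal n).gradedPiece i) := by
  refine Ideal.linearIndependent_mk_of_ringHom (magnusHom n i)
    (fun _ => magnusHom_eq_zero_of_mem) ?_
  simp only [magnusHom_prod_tvar_sub_one]
  exact linearIndependent_mk_monomial sum_single_one_injective_monotone fun ℓ => by simp

theorem span_mk_prod_tvar_sub_one_eq_top (n i : ℕ) :
    Submodule.span ℤ (Set.range fun ℓ : {ℓ : Fin i → Fin n // Monotone ℓ} =>
      (Submodule.Quotient.mk ⟨∏ j, (tvar (ℓ.1 j) - 1),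
        prod_mem_pow (augIdeal n) i _ fun j => tvar_sub_one_mem (ℓ.1 j)⟩ :
        (augIdeal n).gradedPiece i)) = ⊤ := by
  refine eq_top_mono (Submodule.span_mono ?_)
    (Ideal.span_int_image_mk_preimage_pow_eq_top (aug n) (augIdeal_eq_span n).symm i)
  rintro _ ⟨⟨x, hx⟩, hxS, rfl⟩
  obtain ⟨ℓ, hℓ, rfl⟩ := exists_monotone_prod_eq_of_mem_range_pow hxS
  exact ⟨⟨ℓ, hℓ⟩, rfl⟩

/-- For the augmentation ideal `J` of `ℤ[t₁^{±1},…,t_n^{±1}]`, the quotient `J^i/J^{i+1}`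
is a free abelian group with basis the classes of the products
`(t_{ℓ₁}-1)⋯(t_{ℓ_i}-1)` over nondecreasing tuples `1 ≤ ℓ₁ ≤ ⋯ ≤ ℓ_i ≤ n`. -/
theorem augIdeal_graded_basis (n i : ℕ) :
    ∃ b : Module.Basis {ℓ : Fin i → Fin n // Monotone ℓ} ℤ
        (↥(augIdeal n ^ i) ⧸
          Submodule.comap (augIdeal n ^ i).subtype (augIdeal n ^ (i + 1))),
      ∀ ℓ : {ℓ : Fin i → Fin n // Monotone ℓ},
        b ℓ = Submodule.Quotient.mk
          ⟨∏ j : Fin i, (tvar (ℓ.1 j) - 1),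
            prod_mem_pow (augIdeal n) i _ (fun j => tvar_sub_one_mem (ℓ.1 j))⟩ := by
  have hli := linearIndependent_mk_prod_tvar_sub_one n i
  have hsp := (span_mk_prod_tvar_sub_one_eq_top n i).ge
  exact ⟨Module.Basis.mk hli hsp, Module.Basis.mk_apply hli hsp⟩
end

section
/- Let F be the free group on x₁,…,x_m with m ≥ 2. The classes of the commutators [x_r, x_s] with r > s form a basis of the free abelian group Γ²F/Γ³F; in particular Γ²F/Γ³F is free abelian of rank m(m-1)/2. -/
section

variable (m : ℕ)

open scoped commutatorElement

/-- `Γ² F / Γ³ F` for the free group `F` on `m` generators. -/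
abbrev Gamma2ModGamma3 :=
  ↥((⊤ : Subgroup (FreeGroup (Fin m))).lowerCentralSeries 1) ⧸
    ((⊤ : Subgroup (FreeGroup (Fin m))).lowerCentralSeries 2).subgroupOf
      ((⊤ : Subgroup (FreeGroup (Fin m))).lowerCentralSeries 1)

lemma commutator_gamma2_le_gamma3 :
    ⁅(⊤ : Subgroup (FreeGroup (Fin m))).lowerCentralSeries 1, (⊤ : Subgroup (FreeGroup (Fin m))).lowerCentralSeries 1⁆ ≤
      (⊤ : Subgroup (FreeGroup (Fin m))).lowerCentralSeries 2 := by
  rw [Subgroup.lowerCentralSeries_succ]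
  exact Subgroup.commutator_mono le_rfl le_top

noncomputable instance : CommGroup (Gamma2ModGamma3 m) :=
  { (inferInstance : Group (Gamma2ModGamma3 m)) with
    mul_comm := by
      intro a b
      induction a using QuotientGroup.induction_on with
      | H x =>
      induction b using QuotientGroup.induction_on with
      | H y =>
      rw [← QuotientGroup.mk_mul, ← QuotientGroup.mk_mul, QuotientGroup.eq]
      rw [Subgroup.mem_subgroupOf]
      have h : (((x : FreeGroup (Fin m)) * (y : FreeGroup (Fin m)))⁻¹ *
            ((y : FreeGroup (Fin m)) * (x : FreeGroup (Fin m))))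
          = ⁅((y : FreeGroup (Fin m)))⁻¹, ((x : FreeGroup (Fin m)))⁻¹⁆ := by
        group
      show (((x : FreeGroup (Fin m)) * (y : FreeGroup (Fin m)))⁻¹ *
          ((y : FreeGroup (Fin m)) * (x : FreeGroup (Fin m)))) ∈ _
      rw [h]
      exact commutator_gamma2_le_gamma3 m
        (Subgroup.commutator_mem_commutator (inv_mem y.2) (inv_mem x.2)) }

lemma of_commutator_mem_gamma2 (r s : Fin m) :
    ⁅FreeGroup.of r, FreeGroup.of s⁆ ∈ (⊤ : Subgroup (FreeGroup (Fin m))).lowerCentralSeries 1 := by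
  rw [Subgroup.lowerCentralSeries_succ]
  exact Subgroup.commutator_mem_commutator (by simp [Subgroup.lowerCentralSeries_zero])
    (Subgroup.mem_top _)

/-!
The classes of the `[x_r, x_s]` span: modulo `Γ³F`, conjugation fixes `Γ²F` pointwise, so
`[g, h]` is multiplicative in each argument and `Γ²F` is generated modulo `Γ³F` by commutators of
generators; moreover `[x_r, x_r] = 1` and `[x_s, x_r] = [x_r, x_s]⁻¹`.

They are independent: for `s < r`, the homomorphism from `F` to the integral Heisenberg group
sending `x_r` and `x_s` to the two standard generators and every other `x_i` to `1` kills `Γ³F`,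
the Heisenberg group being nilpotent of class two, and its central coordinate is a linear form on
`Γ²F/Γ³F` that is `1` on `[x_r, x_s]` and `0` on every other basic commutator.

Mathlib's `lowerCentralSeries n` is `Γⁿ⁺¹`.
-/

section CommutatorModLowerCentralSeriesTwo

variable {G : Type*} [Group G] {W : Subgroup G}

open Subgroup

theorem conj_mem_of_lowerCentralSeries_two_le (hW : (⊤ : Subgroup G).lowerCentralSeries 2 ≤ W)
    {x : G} (hxW : x ∈ W) (hx : x ∈ (⊤ : Subgroup G).lowerCentralSeries 1) (g : G) :
    g * x * g⁻¹ ∈ W := by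
  have h : g * x * g⁻¹ = ⁅x, g⁆⁻¹ * x := by group
  rw [h]
  exact mul_mem (hW (inv_mem (commutator_mem_commutator hx (mem_top g)))) hxW

theorem commutator_mem_of_mem_closure_right (hW : (⊤ : Subgroup G).lowerCentralSeries 2 ≤ W)
    {S : Set G} {a : G} (ha : ∀ b ∈ S, ⁅a, b⁆ ∈ W) {h : G} (hh : h ∈ closure S) :
    ⁅a, h⁆ ∈ W := by
  induction hh using closure_induction with
  | mem b hb => exact ha b hb
  | one => simp
  | mul h₁ h₂ _ _ ih₁ ih₂ =>
    rw [commutatorElement_mul_right_eq_mul_conj, mul_assoc, mul_assoc, ← mul_assoc h₁]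
    exact mul_mem ih₁ (conj_mem_of_lowerCentralSeries_two_le hW ih₂
      (commutator_mem_commutator (mem_top a) (mem_top h₂)) h₁)
  | inv h _ ih =>
    have h_conj : ⁅a, h⁻¹⁆ = h⁻¹ * ⁅a, h⁆⁻¹ * h⁻¹⁻¹ := by group
    rw [h_conj]
    exact conj_mem_of_lowerCentralSeries_two_le hW (inv_mem ih)
      (inv_mem (commutator_mem_commutator (mem_top a) (mem_top h))) h⁻¹

theorem lowerCentralSeries_one_le_of_commutator_mem {S : Set G} (hS : closure S = ⊤)
    (hW : (⊤ : Subgroup G).lowerCentralSeries 2 ≤ W) (hSW : ∀ a ∈ S, ∀ b ∈ S, ⁅a, b⁆ ∈ W) :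
    (⊤ : Subgroup G).lowerCentralSeries 1 ≤ W := by
  have swap {g h : G} (hgh : ⁅h, g⁆ ∈ W) : ⁅g, h⁆ ∈ W := by
    rw [← commutatorElement_inv]
    exact inv_mem hgh
  have hgen (a : G) (ha : a ∈ S) (h : G) : ⁅a, h⁆ ∈ W :=
    commutator_mem_of_mem_closure_right hW (hSW a ha) (hS ▸ mem_top h)
  exact commutator_le.mpr fun g _ h _ =>
    commutator_mem_of_mem_closure_right hW (fun b hb => swap (hgen b hb g)) (hS ▸ mem_top h)

end CommutatorModLowerCentralSeriesTwo

/-- The integral Heisenberg group: `⟨a, b, c⟩` stands for the matrix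
`[[1, a, c], [0, 1, b], [0, 0, 1]]`. -/
@[ext] structure Heisenberg where
  a : ℤ
  b : ℤ
  c : ℤ

namespace Heisenberg

instance : Mul Heisenberg := ⟨fun x y => ⟨x.a + y.a, x.b + y.b, x.c + y.c + x.a * y.b⟩⟩
instance : One Heisenberg := ⟨⟨0, 0, 0⟩⟩
instance : Inv Heisenberg := ⟨fun x => ⟨-x.a, -x.b, -x.c + x.a * x.b⟩⟩

@[simp] lemma mul_a (x y : Heisenberg) : (x * y).a = x.a + y.a := rfl
@[simp] lemma mul_b (x y : Heisenberg) : (x * y).b = x.b + y.b := rfl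
@[simp] lemma mul_c (x y : Heisenberg) : (x * y).c = x.c + y.c + x.a * y.b := rfl
@[simp] lemma one_a : (1 : Heisenberg).a = 0 := rfl
@[simp] lemma one_b : (1 : Heisenberg).b = 0 := rfl
@[simp] lemma one_c : (1 : Heisenberg).c = 0 := rfl
@[simp] lemma inv_a (x : Heisenberg) : x⁻¹.a = -x.a := rfl
@[simp] lemma inv_b (x : Heisenberg) : x⁻¹.b = -x.b := rfl
@[simp] lemma inv_c (x : Heisenberg) : x⁻¹.c = -x.c + x.a * x.b := rfl

instance : Group Heisenberg where
  mul_assoc x y z := by ext <;> simp <;> ring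
  one_mul x := by ext <;> simp
  mul_one x := by ext <;> simp
  inv_mul_cancel x := by ext <;> simp

lemma commutatorElement_eq (g h : Heisenberg) : ⁅g, h⁆ = ⟨0, 0, g.a * h.b - h.a * g.b⟩ := by
  ext <;> simp [commutatorElement_def]
  ring

def cAxis : Subgroup Heisenberg where
  carrier := {x | x.a = 0 ∧ x.b = 0}
  one_mem' := ⟨rfl, rfl⟩
  mul_mem' := by rintro x y ⟨hxa, hxb⟩ ⟨hya, hyb⟩; simp [hxa, hxb, hya, hyb]
  inv_mem' := by rintro x ⟨hxa, hxb⟩; simp [hxa, hxb]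

lemma lowerCentralSeries_one_le_cAxis : (⊤ : Subgroup Heisenberg).lowerCentralSeries 1 ≤ cAxis :=
  Subgroup.commutator_le.mpr fun g _ h _ => by
    rw [commutatorElement_eq]
    exact ⟨rfl, rfl⟩

lemma cAxis_le_center : cAxis ≤ Subgroup.center Heisenberg := by
  rintro x ⟨hxa, hxb⟩
  rw [Subgroup.mem_center_iff]
  intro g
  ext <;> simp [hxa, hxb]
  ring

lemma lowerCentralSeries_two_eq_bot : (⊤ : Subgroup Heisenberg).lowerCentralSeries 2 = ⊥ :=
  Subgroup.commutator_top_right_eq_bot_iff_le_center.mpr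
    (lowerCentralSeries_one_le_cAxis.trans cAxis_le_center)

end Heisenberg

theorem Subgroup.apply_mem_lowerCentralSeries {G H : Type*} [Group G] [Group H] (f : G →* H)
    {n : ℕ} {x : G} (hx : x ∈ (⊤ : Subgroup G).lowerCentralSeries n) :
    f x ∈ (⊤ : Subgroup H).lowerCentralSeries n := by
  have hmap := Subgroup.map_lowerCentralSeries ⊤ f n
  exact Subgroup.lowerCentralSeries_mono n le_top (hmap ▸ Subgroup.mem_map_of_mem f hx)

namespace Gamma2ModGamma3

open FreeGroup

variable {m}

def commutatorClass (r s : Fin m) : Gamma2ModGamma3 m :=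
  QuotientGroup.mk ⟨⁅of r, of s⁆, of_commutator_mem_gamma2 m r s⟩

lemma commutatorClass_self (r : Fin m) : commutatorClass r r = 1 := by
  simp only [commutatorClass, commutatorElement_self]
  rfl

lemma commutatorClass_swap (r s : Fin m) : commutatorClass s r = (commutatorClass r s)⁻¹ := by
  rw [commutatorClass, commutatorClass, ← QuotientGroup.mk_inv]
  congr 1

lemma commutatorClass_mem_of_forall_lt {T : Subgroup (Gamma2ModGamma3 m)}
    (hT : ∀ r s, s < r → commutatorClass r s ∈ T) (r s : Fin m) : commutatorClass r s ∈ T := by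
  rcases lt_trichotomy s r with hsr | rfl | hrs
  · exact hT r s hsr
  · rw [commutatorClass_self]
    exact one_mem T
  · rw [commutatorClass_swap s r]
    exact inv_mem (hT s r hrs)

theorem eq_top_of_commutatorClass_mem {T : Subgroup (Gamma2ModGamma3 m)}
    (hT : ∀ r s, s < r → commutatorClass r s ∈ T) : T = ⊤ := by
  set Γ₂ := (⊤ : Subgroup (FreeGroup (Fin m))).lowerCentralSeries 1
  set Γ₃ := (⊤ : Subgroup (FreeGroup (Fin m))).lowerCentralSeries 2
  set π := QuotientGroup.mk' (Γ₃.subgroupOf Γ₂)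
  have hΓ₂ : Γ₂ ≤ (T.comap π).map Γ₂.subtype := by
    refine lowerCentralSeries_one_le_of_commutator_mem (closure_range_of (Fin m)) ?_ ?_
    · intro x hx
      have hx₂ : x ∈ Γ₂ := Subgroup.lowerCentralSeries_antitone ⊤ (show 1 ≤ 2 by norm_num) hx
      have hπx : π ⟨x, hx₂⟩ = 1 := (QuotientGroup.eq_one_iff _).mpr hx
      exact ⟨⟨x, hx₂⟩, show π ⟨x, hx₂⟩ ∈ T from hπx ▸ one_mem T, rfl⟩
    · rintro _ ⟨r, rfl⟩ _ ⟨s, rfl⟩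
      exact ⟨_, commutatorClass_mem_of_forall_lt hT r s, rfl⟩
  rw [eq_top_iff]
  rintro q -
  obtain ⟨x, rfl⟩ := QuotientGroup.mk'_surjective _ q
  obtain ⟨y, hy, hyx⟩ := hΓ₂ x.2
  rwa [← Subtype.ext hyx]

def basicCommutator (q : {p : Fin m × Fin m // p.2 < p.1}) : Additive (Gamma2ModGamma3 m) :=
  Additive.ofMul (commutatorClass q.1.1 q.1.2)

theorem span_basicCommutator_eq_top :
    Submodule.span ℤ (Set.range (basicCommutator (m := m))) = ⊤ := by
  have hV : AddSubgroup.toSubgroup'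
      (Submodule.span ℤ (Set.range (basicCommutator (m := m)))).toAddSubgroup = ⊤ :=
    eq_top_of_commutatorClass_mem fun r s hsr =>
      (AddSubgroup.mem_toSubgroup' _ _).mpr (Submodule.subset_span ⟨⟨(r, s), hsr⟩, rfl⟩)
  rw [eq_top_iff]
  intro x _
  exact (AddSubgroup.mem_toSubgroup' _ _).mp (hV ▸ Subgroup.mem_top x.toMul)

noncomputable def centralCoord (f : FreeGroup (Fin m) →* Heisenberg) :
    Additive (Gamma2ModGamma3 m) →+ ℤ :=
  MonoidHom.toAdditiveLeft <| QuotientGroup.lift _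
    { toFun := fun x => Multiplicative.ofAdd (f x).c
      map_one' := by simp
      map_mul' := fun x y => by
        have hxa : (f x).a = 0 := (Heisenberg.lowerCentralSeries_one_le_cAxis
          (Subgroup.apply_mem_lowerCentralSeries f x.2)).1
        rw [Subgroup.coe_mul, _root_.map_mul, Heisenberg.mul_c, hxa, zero_mul, add_zero,
          ofAdd_add] }
    (fun x hx => by
      have hfx := Subgroup.apply_mem_lowerCentralSeries f (Subgroup.mem_subgroupOf.mp hx)
      rw [Heisenberg.lowerCentralSeries_two_eq_bot, Subgroup.mem_bot] at hfx
      rw [MonoidHom.mem_ker]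
      change Multiplicative.ofAdd (f x).c = 1
      rw [hfx]
      rfl)

lemma centralCoord_commutatorClass (f : FreeGroup (Fin m) →* Heisenberg) (r s : Fin m) :
    centralCoord f (Additive.ofMul (commutatorClass r s)) =
      (f (of r)).a * (f (of s)).b - (f (of s)).a * (f (of r)).b := by
  change (f ⁅of r, of s⁆).c = _
  rw [map_commutatorElement, Heisenberg.commutatorElement_eq]

noncomputable def commutatorCoords :
    Additive (Gamma2ModGamma3 m) →ₗ[ℤ] ({p : Fin m × Fin m // p.2 < p.1} → ℤ) :=
  LinearMap.pi fun p => AddMonoidHom.toIntLinearMap <| centralCoord <|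
    FreeGroup.lift fun i =>
      ⟨(Pi.single p.1.1 1 : Fin m → ℤ) i, (Pi.single p.1.2 1 : Fin m → ℤ) i, 0⟩

lemma commutatorCoords_basicCommutator (q : {p : Fin m × Fin m // p.2 < p.1}) :
    commutatorCoords (basicCommutator q) = Pi.single q 1 := by
  ext p
  simp only [basicCommutator, commutatorCoords, LinearMap.pi_apply, AddMonoidHom.coe_toIntLinearMap,
    centralCoord_commutatorClass, lift_apply_of]
  have hcross : ¬(q.1.2 = p.1.1 ∧ q.1.1 = p.1.2) := fun ⟨h₁, h₂⟩ =>
    (h₁ ▸ h₂ ▸ q.2).asymm p.2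
  simp only [Pi.single_apply, ite_zero_mul_ite_zero, mul_one, if_neg hcross, sub_zero]
  refine if_congr ?_ rfl rfl
  rw [Subtype.ext_iff, Prod.ext_iff, eq_comm, @eq_comm _ q.1.2]

theorem linearIndependent_basicCommutator : LinearIndependent ℤ (basicCommutator (m := m)) := by
  refine LinearIndependent.of_comp commutatorCoords ?_
  have hcoords : commutatorCoords ∘ basicCommutator (m := m) = Pi.basisFun ℤ _ :=
    funext fun q => by simp [commutatorCoords_basicCommutator]
  rw [hcoords]
  exact (Pi.basisFun ℤ _).linearIndependent

end Gamma2ModGamma3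

theorem basis_gamma2_mod_gamma3 :
    ∃ b : Module.Basis {p : Fin m × Fin m // p.2 < p.1} ℤ (Additive (Gamma2ModGamma3 m)),
      ∀ p : {p : Fin m × Fin m // p.2 < p.1},
        b p = Additive.ofMul (α := Gamma2ModGamma3 m)
          (QuotientGroup.mk ⟨⁅FreeGroup.of p.1.1, FreeGroup.of p.1.2⁆,
            of_commutator_mem_gamma2 m p.1.1 p.1.2⟩) :=
  ⟨.mk Gamma2ModGamma3.linearIndependent_basicCommutator
      Gamma2ModGamma3.span_basicCommutator_eq_top.ge,
    fun _ => Module.Basis.mk_apply _ _ _⟩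

end
end

section
/- For r < n, the degree-1 part of the Gassner matrix g_n(A_{rn}) modulo J² is (t_n - 1)(e_{rr} - e_{nr}) + (t_r - 1)(e_{nn} - e_{rn}); consequently, the images of A_{1n},…,A_{n-1,n} in K¹/K² are ℤ-linearly independent, where K^i is the congruence subgroup of level J^i. -/
/-- The unreduced Gassner matrix `G_n(A_{rs})`: the identity matrix except for the entries
`(r,r) = 1 - t_r + t_r t_s`, `(r,s) = t_r(1-t_r)`, `(s,r) = 1 - t_s`, `(s,s) = t_r`, and
`(k,r) = (1-t_k)(1-t_s)`, `(k,s) = (1-t_k)(t_r-1)` for `r < k < s`. -/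
noncomputable def gassner (n : ℕ) (r s : Fin n) : Matrix (Fin n) (Fin n) (LaurentMv n) :=
  Matrix.of fun k l =>
    if k = r ∧ l = r then 1 - tvar r + tvar r * tvar s
    else if k = r ∧ l = s then tvar r * (1 - tvar r)
    else if k = s ∧ l = r then 1 - tvar s
    else if k = s ∧ l = s then tvar r
    else if r < k ∧ k < s ∧ l = r then (1 - tvar k) * (1 - tvar s)
    else if r < k ∧ k < s ∧ l = s then (1 - tvar k) * (tvar r - 1)
    else if k = l then 1 else 0

open Matrix

/-!
Modulo `J²` every `t_i` is `1 + (t_i - 1)` with all products `(t_i - 1)(t_j - 1)` vanishing, so the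
first part is an entrywise computation. For the independence, the ring map
`ℤ[t^{±1}] → ℤ[ε]/(ε²)`, `t_r ↦ 1 + ε`, `t_j ↦ 1` (`j ≠ r`) sends `J` into `(ε)` and so kills
`J²`. On the `(r, s)` entry it sends `g(A_{rs}) - 1` to `-ε` and `g(A_{bs}) - 1` to `0` for
`b ≠ r`, so it reads off `-c_r ε` from a relation `∑ c_b (g(A_{bs}) - 1) ≡ 0`.
-/

open DualNumber

section

variable {n : ℕ}

noncomputable def dualEval (i : Fin n) : LaurentMv n →ₐ[ℤ] DualNumber ℤ :=
  AddMonoidAlgebra.lift ℤ _ _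
    { toFun := fun a => 1 + (a.toAdd i) • ε
      map_one' := by simp
      map_mul' := fun a b => by
        simp only [toAdd_mul, Finsupp.add_apply, add_smul, mul_add, add_mul, one_mul, mul_one,
          smul_mul_smul_comm, eps_mul_eps, smul_zero]
        abel }

lemma dualEval_tvar (i j : Fin n) : dualEval i (tvar j) = if j = i then 1 + ε else 1 := by
  rw [tvar, dualEval, AddMonoidAlgebra.lift_single]
  split_ifs with h <;> simp [h]

lemma fst_dualEval (i : Fin n) (x : LaurentMv n) : (dualEval i x).fst = aug n x := by
  induction x using AddMonoidAlgebra.induction_linear with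
  | zero => simp
  | add f g hf hg => simp [hf, hg]
  | single a m =>
    simp [dualEval, aug, AddMonoidAlgebra.lift_single, AddMonoidAlgebra.liftNCRingHom]

lemma augIdeal_sq_le_ker_dualEval (i : Fin n) : augIdeal n ^ 2 ≤ RingHom.ker (dualEval i) := by
  rw [sq, Ideal.mul_le]
  intro x hx y hy
  have hx' : (dualEval i x).fst = 0 := (fst_dualEval i x).trans hx
  have hy' : (dualEval i y).fst = 0 := (fst_dualEval i y).trans hy
  rw [RingHom.mem_ker, map_mul]
  ext <;> simp [hx', hy']

lemma tvar_sub_one_mem_augIdeal (i : Fin n) : tvar i - 1 ∈ augIdeal n := by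
  rw [augIdeal, RingHom.mem_ker, map_sub, map_one, ← fst_dualEval i, dualEval_tvar]
  simp

lemma mul_tvar_sub_one_mul_mem_augIdeal_sq (z : LaurentMv n) (i j : Fin n) :
    z * ((tvar i - 1) * (tvar j - 1)) ∈ augIdeal n ^ 2 :=
  Ideal.mul_mem_left _ _ (sq (augIdeal n) ▸
    Ideal.mul_mem_mul (tvar_sub_one_mem_augIdeal i) (tvar_sub_one_mem_augIdeal j))

noncomputable def gassnerDegreeOne (r s : Fin n) : Matrix (Fin n) (Fin n) (LaurentMv n) :=
  (tvar s - 1) • (single r r 1 - single s r 1) +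
    (tvar r - 1) • (single s s 1 - single r s 1)

lemma gassner_sub_one_sub_gassnerDegreeOne_mem {r s : Fin n} (hrs : r < s) (k l : Fin n) :
    gassner n r s k l - (1 : Matrix (Fin n) (Fin n) (LaurentMv n)) k l - gassnerDegreeOne r s k l
      ∈ augIdeal n ^ 2 := by
  have hsr := hrs.ne'
  simp only [gassner, gassnerDegreeOne, of_apply, one_apply, Matrix.add_apply,
    Matrix.smul_apply, Matrix.sub_apply, single_apply, smul_eq_mul]
  obtain rfl | hkr := eq_or_ne k r
  · obtain rfl | hlk := eq_or_ne l k
    · convert mul_tvar_sub_one_mul_mem_augIdeal_sq 1 l s using 1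
      simp [hsr]; ring
    obtain rfl | hls := eq_or_ne l s
    · convert mul_tvar_sub_one_mul_mem_augIdeal_sq (-1) k k using 1
      simp [hsr, hsr.symm]; ring
    · simp [hlk, hls, hlk.symm, hls.symm, hsr.symm]
  obtain rfl | hks := eq_or_ne k s
  · obtain rfl | hlr := eq_or_ne l r
    · simp [hsr, hsr.symm]
    obtain rfl | hls := eq_or_ne l k
    · simp [hsr, hkr.symm]
    · simp [hlr, hls, hkr, hls.symm, hlr.symm, hkr.symm]
  by_cases hmid : r < k ∧ k < s
  · obtain rfl | hlr := eq_or_ne l r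
    · convert mul_tvar_sub_one_mul_mem_augIdeal_sq 1 k s using 1
      simp [hmid, hkr, hks, hkr.symm, hks.symm]; ring
    obtain rfl | hls := eq_or_ne l s
    · convert mul_tvar_sub_one_mul_mem_augIdeal_sq (-1) k r using 1
      simp [hmid, hkr, hks, hks.symm, hkr.symm, hlr, hlr.symm]; ring
    · simp [hmid, hkr, hks, hlr, hls, hkr.symm, hks.symm, hlr.symm, hls.symm]
  · simp [← and_assoc, hmid, hkr, hks, hkr.symm, hks.symm]

lemma dualEval_gassner_sub_one_apply (b : Fin n) {r s : Fin n} (hrs : r ≠ s) :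
    dualEval r ((gassner n b s - 1) r s) = if b = r then -ε else 0 := by
  obtain rfl | hbr := eq_or_ne b r
  · simp [gassner, hrs, hrs.symm, dualEval_tvar, add_mul, eps_mul_eps]
  · simp [gassner, hbr, hbr.symm, hrs, hrs.symm, apply_ite (dualEval r), dualEval_tvar]

lemma coeff_eq_zero_of_sum_gassner_sub_one_mem (s : Fin n) (c : Fin n → ℤ)
    (h : ∀ k l, (∑ b ∈ Finset.univ.erase s,
      c b • (gassner n b s k l - (1 : Matrix (Fin n) (Fin n) (LaurentMv n)) k l)) ∈ augIdeal n ^ 2)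
    (r : Fin n) (hrs : r ≠ s) : c r = 0 := by
  have hz := augIdeal_sq_le_ker_dualEval r (h r s)
  simp only [RingHom.mem_ker, map_sum, map_zsmul, ← Matrix.sub_apply,
    dualEval_gassner_sub_one_apply _ hrs] at hz
  simpa [hrs] using congrArg TrivSqZeroExt.snd hz

end

/-- For `r < n+1 = ` last index, the degree-1 part of the Gassner matrix
`g(A_{r,last})` modulo `J²` is `(t_last-1)(e_{rr} - e_{last,r}) + (t_r-1)(e_{last,last}
- e_{r,last})`; consequently the images of the `A_{r,last}` (for `r ≠ last`) in
`K¹/K² ≅ M_n(J/J²)` are `ℤ`-linearly independent. -/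
theorem gassner_degree_one_part (n : ℕ) :
    (∀ r : Fin (n + 1), r ≠ Fin.last n → ∀ k l : Fin (n + 1),
      gassner (n + 1) r (Fin.last n) k l
          - (1 : Matrix (Fin (n + 1)) (Fin (n + 1)) (LaurentMv (n + 1))) k l
          - (((tvar (Fin.last n) - 1) •
              (Matrix.single r r (1 : LaurentMv (n + 1))
                - Matrix.single (Fin.last n) r 1)
            + (tvar r - 1) •
              (Matrix.single (Fin.last n) (Fin.last n) (1 : LaurentMv (n + 1))
                - Matrix.single r (Fin.last n) 1)
              : Matrix (Fin (n + 1)) (Fin (n + 1)) (LaurentMv (n + 1))) k l)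
        ∈ augIdeal (n + 1) ^ 2) ∧
    (∀ c : Fin (n + 1) → ℤ,
      (∀ k l : Fin (n + 1),
        (∑ r ∈ Finset.univ.erase (Fin.last n),
          c r • (gassner (n + 1) r (Fin.last n) k l
            - (1 : Matrix (Fin (n + 1)) (Fin (n + 1)) (LaurentMv (n + 1))) k l))
          ∈ augIdeal (n + 1) ^ 2) →
      ∀ r : Fin (n + 1), r ≠ Fin.last n → c r = 0) :=
  ⟨fun _ hr => gassner_sub_one_sub_gassnerDegreeOne_mem (Fin.lt_last_iff_ne_last.mpr hr),
    coeff_eq_zero_of_sum_gassner_sub_one_mem (Fin.last n)⟩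
end

section
/- Let R be a commutative ring, J an ideal, K^i the level-J^i congruence subgroup of GL_n(R), and for A ∈ K^i write A ≡ I + Ā with Ā ∈ M_n(J^i/J^{i+1}). Then for A ∈ K^i and B ∈ K^j, the commutator [A,B] lies in K^{i+j} and its leading term in M_n(J^{i+j}/J^{i+j+1}) equals the matrix commutator ĀB̄ - B̄Ā. -/
open Matrix
open scoped commutatorElement

/-!
Writing `a = A - 1` and `b = B - 1`, one has `AB - BA = ab - ba`, hence
`⁅A, B⁆ - 1 = (ab - ba) A⁻¹B⁻¹`. Entrywise `ab - ba` lies in `J^{i+j}`, and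
`A⁻¹B⁻¹ ≡ 1 mod J` because `i, j ≥ 1`, so the error `(ab - ba)(A⁻¹B⁻¹ - 1)`
lies in `J^{i+j+1}`.
-/

namespace Units

variable {S : Type*} [Ring S]

theorem inv_sub_one_mem {𝔞 : Ideal S} (u : Sˣ) (h : (u : S) - 1 ∈ 𝔞) :
    ((u⁻¹ : Sˣ) : S) - 1 ∈ 𝔞 := by
  have hinv : ((u⁻¹ : Sˣ) : S) - 1 = -(((u⁻¹ : Sˣ) : S) * ((u : S) - 1)) := by
    rw [mul_sub, Units.inv_mul, mul_one, neg_sub]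
  rw [hinv]
  exact neg_mem (𝔞.mul_mem_left _ h)

theorem mul_sub_one_mem {𝔞 : Ideal S} (u v : Sˣ) (hu : (u : S) - 1 ∈ 𝔞)
    (hv : (v : S) - 1 ∈ 𝔞) : ((u * v : Sˣ) : S) - 1 ∈ 𝔞 := by
  have hmul : ((u * v : Sˣ) : S) - 1 = (u : S) * ((v : S) - 1) + ((u : S) - 1) := by
    push_cast; noncomm_ring
  rw [hmul]
  exact add_mem (𝔞.mul_mem_left _ hv) hu

theorem val_commutatorElement_sub_one_s18 (u v : Sˣ) :
    ((⁅u, v⁆ : Sˣ) : S) - 1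
      = (((u : S) - 1) * ((v : S) - 1) - ((v : S) - 1) * ((u : S) - 1))
        * ((u⁻¹ * v⁻¹ : Sˣ) : S) := by
  have hab : ((u : S) - 1) * ((v : S) - 1) - ((v : S) - 1) * ((u : S) - 1)
      = (u : S) * v - v * u := by noncomm_ring
  rw [hab, sub_mul, commutatorElement_def]
  simp [mul_assoc]

end Units

namespace Ideal

variable {R : Type*} [CommSemiring R] {ι : Type*} [Fintype ι] [DecidableEq ι]

theorem mul_mem_matrix_mul {I I' : Ideal R} {X Y : Matrix ι ι R} (hX : X ∈ I.matrix ι)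
    (hY : Y ∈ I'.matrix ι) : X * Y ∈ (I * I').matrix ι := fun k l =>
  sum_mem _ fun m _ => mul_mem_mul (hX k m) (hY m l)

end Ideal

/-- Let `R` be a commutative ring, `J` an ideal, and let `A ∈ K^i`, `B ∈ K^j` be
invertible matrices congruent to the identity mod `J^i`, resp. `J^j`.  Then the
commutator `⁅A,B⁆ = ABA⁻¹B⁻¹` lies in `K^{i+j}`, and its leading term in
`M_n(J^{i+j}/J^{i+j+1})` is the matrix commutator `ĀB̄ - B̄Ā` of the leading terms:
entrywise, `⁅A,B⁆ - 1 ≡ (A-1)(B-1) - (B-1)(A-1) mod J^{i+j+1}`. -/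
theorem commutator_leading_term (R : Type) [CommRing R] (n : ℕ) (J : Ideal R)
    (i j : ℕ) (hi : 1 ≤ i) (hj : 1 ≤ j) (A B : GL (Fin n) R)
    (hA : ∀ k l, (A : Matrix (Fin n) (Fin n) R) k l
        - (1 : Matrix (Fin n) (Fin n) R) k l ∈ J ^ i)
    (hB : ∀ k l, (B : Matrix (Fin n) (Fin n) R) k l
        - (1 : Matrix (Fin n) (Fin n) R) k l ∈ J ^ j) :
    (∀ k l, ((⁅A, B⁆ : GL (Fin n) R) : Matrix (Fin n) (Fin n) R) k l
        - (1 : Matrix (Fin n) (Fin n) R) k l ∈ J ^ (i + j)) ∧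
    (∀ k l, ((⁅A, B⁆ : GL (Fin n) R) : Matrix (Fin n) (Fin n) R) k l
        - (1 : Matrix (Fin n) (Fin n) R) k l
        - ((((A : Matrix (Fin n) (Fin n) R) - 1) * ((B : Matrix (Fin n) (Fin n) R) - 1)
            - ((B : Matrix (Fin n) (Fin n) R) - 1) * ((A : Matrix (Fin n) (Fin n) R) - 1))
            k l)
        ∈ J ^ (i + j + 1)) := by
  set C := ((A : Matrix (Fin n) (Fin n) R) - 1) * ((B : Matrix (Fin n) (Fin n) R) - 1)
    - ((B : Matrix (Fin n) (Fin n) R) - 1) * ((A : Matrix (Fin n) (Fin n) R) - 1)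
  have hC : C ∈ (J ^ (i + j)).matrix (Fin n) := by
    rw [pow_add]
    refine sub_mem (Ideal.mul_mem_matrix_mul hA hB) ?_
    rw [mul_comm]
    exact Ideal.mul_mem_matrix_mul hB hA
  have hinv :
      ((A⁻¹ * B⁻¹ : GL (Fin n) R) : Matrix (Fin n) (Fin n) R) - 1 ∈ J.matrix (Fin n) :=
    Units.mul_sub_one_mem _ _
      (Units.inv_sub_one_mem A (Ideal.matrix_monotone _ (Ideal.pow_le_self (by omega)) hA))
      (Units.inv_sub_one_mem B (Ideal.matrix_monotone _ (Ideal.pow_le_self (by omega)) hB))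
  have herror : C * (((A⁻¹ * B⁻¹ : GL (Fin n) R) : Matrix (Fin n) (Fin n) R) - 1)
      ∈ (J ^ (i + j + 1)).matrix (Fin n) := by
    rw [pow_succ]
    exact Ideal.mul_mem_matrix_mul hC hinv
  have hcomm : ((⁅A, B⁆ : GL (Fin n) R) : Matrix (Fin n) (Fin n) R) - 1
      = C + C * (((A⁻¹ * B⁻¹ : GL (Fin n) R) : Matrix (Fin n) (Fin n) R) - 1) := by
    rw [mul_sub, mul_one, add_sub_cancel]
    exact Units.val_commutatorElement_sub_one_s18 A B
  refine ⟨fun k l => ?_, fun k l => ?_⟩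
  · have h := add_mem hC (Ideal.matrix_monotone _ (Ideal.pow_le_pow_right (by omega)) herror)
    rw [← hcomm] at h
    exact h k l
  · have h : ((⁅A, B⁆ : GL (Fin n) R) : Matrix (Fin n) (Fin n) R) - 1 - C
        ∈ (J ^ (i + j + 1)).matrix (Fin n) := by
      rwa [hcomm, add_sub_cancel_left]
    exact h k l
end

section
/- Let F be a free group and s ≥ 5. Then [Γ^{s-2}F, Γ²F] · Γ^{s+1}F is a normal subgroup of Γ^sF, and the quotient Γ^sF / ([Γ^{s-2}F,Γ²F]·Γ^{s+1}F) is generated by the images of the s-fold left-normed commutators […[[x_{ℓ₁},x_{ℓ₂}],x_{ℓ₃}],…,x_{ℓ_s}] in the generators x_j of F. -/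
/-!
Write `Γₙ` for `lowerCentralSeries n` of a group generated by a family `x`. Modulo
`K = Γₙ₊₂ ⊔ ⟨(n+2)-fold left-normed commutators of the x i⟩` (normal, as its second part is
central modulo `Γₙ₊₂`), every `(n+1)`-fold left-normed commutator `c` commutes with each generator,
since `⁅c, x i⁆` is an `(n+2)`-fold one; so `c` is central mod `K`, as is `Γₙ₊₁`. Inductively
`Γₙ = Γₙ₊₁ ⊔ ⟨(n+1)-fold commutators⟩` is then central mod `K`, i.e. `Γₙ₊₁ = ⁅Γₙ, G⁆ ≤ K`.
The extra term of the theorem is harmless: `⁅Γₘ, Γₖ⁆ ≤ Γₘ₊ₖ₊₁` by the three subgroups lemma.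
-/

open scoped commutatorElement

/-- The left-normed iterated commutator of a list of group elements:
`lnc [a] = a`, `lnc [a, b] = ⁅a, b⁆`, `lnc (a :: rest) = […[⁅a, b⁆, c], …]`. -/
def lnc {G : Type} [Group G] : List G → G
  | [] => 1
  | a :: rest => rest.foldl (fun c x => ⁅c, x⁆) a

namespace Subgroup

variable {G : Type*} [Group G]

theorem commutatorElement_mem_iff_commute (N : Subgroup G) [N.Normal] (a b : G) :
    ⁅a, b⁆ ∈ N ↔ Commute (a : G ⧸ N) (b : G ⧸ N) := by
  rw [← QuotientGroup.eq_one_iff, ← commutatorElement_eq_one_iff_commute]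
  exact Iff.rfl

theorem commutator_top_le_iff_map_le_center {N : Subgroup G} [N.Normal] {H : Subgroup G} :
    ⁅H, ⊤⁆ ≤ N ↔ H.map (QuotientGroup.mk' N) ≤ center (G ⧸ N) := by
  rw [← commutator_top_right_eq_bot_iff_le_center,
    ← map_top_of_surjective _ (QuotientGroup.mk'_surjective N), ← map_commutator,
    map_eq_bot_iff, QuotientGroup.ker_mk']

theorem normal_of_le_center {H : Subgroup G} (h : H ≤ center G) : H.Normal :=
  ⟨fun n hn g => by rw [mem_center_iff.mp (h hn) g, mul_inv_cancel_right]; exact hn⟩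

theorem sup_normal_of_commutator_top_le {N : Subgroup G} [N.Normal] {H : Subgroup G}
    (h : ⁅H, ⊤⁆ ≤ N) : (N ⊔ H).Normal := by
  have := normal_of_le_center (commutator_top_le_iff_map_le_center.mp h)
  rw [sup_comm, ← QuotientGroup.ker_mk' N, ← comap_map_eq]
  infer_instance

/-- Hall's three subgroups lemma. -/
theorem commutator_commutator_le_of_rotate {A B C N : Subgroup G} [N.Normal]
    (h1 : ⁅⁅B, C⁆, A⁆ ≤ N) (h2 : ⁅⁅C, A⁆, B⁆ ≤ N) : ⁅⁅A, B⁆, C⁆ ≤ N := by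
  have hmap : ∀ X Y Z : Subgroup G, ⁅⁅X, Y⁆, Z⁆ ≤ N ↔
      ⁅⁅X.map (QuotientGroup.mk' N), Y.map (QuotientGroup.mk' N)⁆,
        Z.map (QuotientGroup.mk' N)⁆ = ⊥ := fun X Y Z => by
    rw [← map_commutator, ← map_commutator, map_eq_bot_iff, QuotientGroup.ker_mk']
  rw [hmap] at h1 h2 ⊢
  exact commutator_commutator_eq_bot_of_rotate h1 h2

theorem commutator_lowerCentralSeries_le (m k : ℕ) :
    ⁅(⊤ : Subgroup G).lowerCentralSeries m, (⊤ : Subgroup G).lowerCentralSeries k⁆ ≤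
      (⊤ : Subgroup G).lowerCentralSeries (m + k + 1) := by
  induction k generalizing m with
  | zero => rfl
  | succ k ih =>
    rw [lowerCentralSeries_succ, commutator_comm, show m + (k + 1) + 1 = m + 1 + k + 1 by omega]
    refine commutator_commutator_le_of_rotate ?_ ?_
    · rw [commutator_comm ⊤, ← lowerCentralSeries_succ]
      exact ih (m + 1)
    · calc ⁅⁅(⊤ : Subgroup G).lowerCentralSeries m, (⊤ : Subgroup G).lowerCentralSeries k⁆, ⊤⁆
          ≤ ⁅(⊤ : Subgroup G).lowerCentralSeries (m + k + 1), ⊤⁆ := commutator_mono (ih m) le_rfl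
        _ = (⊤ : Subgroup G).lowerCentralSeries (m + 1 + k + 1) := by
          rw [show m + 1 + k + 1 = m + k + 1 + 1 by omega]; rfl

end Subgroup

section LeftNormed

variable {G : Type} [Group G]

theorem lnc_cons_cons (a b : G) (L : List G) : lnc (a :: b :: L) = lnc (⁅a, b⁆ :: L) := rfl

theorem lnc_append_singleton (a : G) (L : List G) (b : G) :
    lnc (a :: L ++ [b]) = ⁅lnc (a :: L), b⁆ := by
  simp [lnc, List.foldl_append]

theorem lnc_cons_mem_lowerCentralSeries {a : G} {k : ℕ}
    (ha : a ∈ (⊤ : Subgroup G).lowerCentralSeries k) (L : List G) :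
    lnc (a :: L) ∈ (⊤ : Subgroup G).lowerCentralSeries (k + L.length) := by
  induction L generalizing a k with
  | nil => exact ha
  | cons b L ih =>
    rw [lnc_cons_cons, List.length_cons, ← add_assoc, add_right_comm]
    exact ih (Subgroup.commutator_mem_commutator ha (Subgroup.mem_top b))

variable {ι : Type*} (x : ι → G)

def leftNormedCommutators (n : ℕ) : Set G :=
  {c | ∃ ℓ : Fin n → ι, c = lnc (List.ofFn fun i => x (ℓ i))}

theorem leftNormedCommutators_subset_lowerCentralSeries (n : ℕ) :
    leftNormedCommutators x (n + 1) ⊆ (⊤ : Subgroup G).lowerCentralSeries n := by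
  rintro _ ⟨ℓ, rfl⟩
  rw [List.ofFn_succ]
  have h := lnc_cons_mem_lowerCentralSeries (k := 0) (Subgroup.mem_top (x (ℓ 0)))
    (List.ofFn fun i => x (ℓ i.succ))
  rwa [zero_add, List.length_ofFn] at h

theorem commutatorElement_mem_leftNormedCommutators {n : ℕ} {c : G}
    (hc : c ∈ leftNormedCommutators x (n + 1)) (i : ι) :
    ⁅c, x i⁆ ∈ leftNormedCommutators x (n + 2) := by
  obtain ⟨ℓ, rfl⟩ := hc
  refine ⟨Fin.snoc ℓ i, ?_⟩
  have hsnoc : (List.ofFn fun j => x (Fin.snoc (α := fun _ => ι) ℓ i j)) =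
      (List.ofFn fun j => x (ℓ j)) ++ [x i] := by
    rw [List.ofFn_succ']
    simp only [Fin.snoc_castSucc, Fin.snoc_last, List.concat_eq_append]
  rw [hsnoc, List.ofFn_succ, lnc_append_singleton]

end LeftNormed

section Generation

open Subgroup

variable {G : Type} [Group G] {ι : Type*} {x : ι → G}

theorem sup_closure_leftNormedCommutators_le (n : ℕ) :
    (⊤ : Subgroup G).lowerCentralSeries (n + 1) ⊔ closure (leftNormedCommutators x (n + 1)) ≤
      (⊤ : Subgroup G).lowerCentralSeries n :=
  sup_le (Subgroup.lowerCentralSeries_antitone _ n.le_succ)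
    ((closure_le _).mpr (leftNormedCommutators_subset_lowerCentralSeries x n))

theorem lowerCentralSeries_succ_le_sup_closure (hx : closure (Set.range x) = ⊤) {n : ℕ}
    (ih : (⊤ : Subgroup G).lowerCentralSeries n ≤
      (⊤ : Subgroup G).lowerCentralSeries (n + 1) ⊔ closure (leftNormedCommutators x (n + 1))) :
    (⊤ : Subgroup G).lowerCentralSeries (n + 1) ≤
      (⊤ : Subgroup G).lowerCentralSeries (n + 2) ⊔ closure (leftNormedCommutators x (n + 2)) := by
  set K := (⊤ : Subgroup G).lowerCentralSeries (n + 2) ⊔ closure (leftNormedCommutators x (n + 2))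
  have hcentral : ⁅closure (leftNormedCommutators x (n + 2)), ⊤⁆ ≤
      (⊤ : Subgroup G).lowerCentralSeries (n + 2) :=
    commutator_mono ((closure_le _).mpr (leftNormedCommutators_subset_lowerCentralSeries x _)) le_rfl
  have : K.Normal := sup_normal_of_commutator_top_le hcentral
  have hgen : closure (Set.range (QuotientGroup.mk' K ∘ x)) = ⊤ := by
    rw [Set.range_comp, ← MonoidHom.map_closure, hx,
      map_top_of_surjective _ (QuotientGroup.mk'_surjective K)]
  rw [Subgroup.lowerCentralSeries_succ, commutator_top_le_iff_map_le_center]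
  refine (map_mono ih).trans ?_
  rw [Subgroup.map_sup, sup_le_iff]
  constructor
  · exact commutator_top_le_iff_map_le_center.mp le_sup_left
  · rw [MonoidHom.map_closure, closure_le]
    rintro _ ⟨c, hc, rfl⟩
    rw [SetLike.mem_coe, center_eq_iInf hgen]
    simp only [mem_iInf]
    rintro _ ⟨i, rfl⟩
    have hci : ⁅c, x i⁆ ∈ K :=
      mem_sup_right (subset_closure (commutatorElement_mem_leftNormedCommutators x hc i))
    exact mem_centralizer_singleton_iff.mpr ((commutatorElement_mem_iff_commute K c (x i)).mp hci)

theorem lowerCentralSeries_eq_sup_closure_leftNormedCommutators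
    (hx : closure (Set.range x) = ⊤) (n : ℕ) :
    (⊤ : Subgroup G).lowerCentralSeries n =
      (⊤ : Subgroup G).lowerCentralSeries (n + 1) ⊔ closure (leftNormedCommutators x (n + 1)) := by
  refine le_antisymm ?_ (sup_closure_leftNormedCommutators_le n)
  induction n with
  | zero =>
    rw [Subgroup.lowerCentralSeries_zero, ← hx]
    refine le_sup_of_le_right (closure_mono ?_)
    rintro _ ⟨i, rfl⟩
    exact ⟨fun _ => i, rfl⟩
  | succ n ih => exact lowerCentralSeries_succ_le_sup_closure hx ih

end Generation

-- `Γ^i F` is `lowerCentralSeries (i - 1)`.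
theorem gamma_s_generated_by_lnc_general (α : Type) (s : ℕ) :
    (((⁅(⊤ : Subgroup (FreeGroup α)).lowerCentralSeries (s - 3), (⊤ : Subgroup (FreeGroup α)).lowerCentralSeries 1⁆ ⊔
        (⊤ : Subgroup (FreeGroup α)).lowerCentralSeries s).subgroupOf
          ((⊤ : Subgroup (FreeGroup α)).lowerCentralSeries (s - 1))).Normal) ∧
    (⊤ : Subgroup (FreeGroup α)).lowerCentralSeries (s - 1) =
      (⁅(⊤ : Subgroup (FreeGroup α)).lowerCentralSeries (s - 3), (⊤ : Subgroup (FreeGroup α)).lowerCentralSeries 1⁆ ⊔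
        (⊤ : Subgroup (FreeGroup α)).lowerCentralSeries s) ⊔
      Subgroup.closure
        {c : FreeGroup α | ∃ ℓ : Fin s → α,
          c = lnc (List.ofFn fun i => FreeGroup.of (ℓ i))} := by
  constructor
  · exact Subgroup.Normal.subgroupOf inferInstance _
  rcases s with _ | n
  · simp
  have key := lowerCentralSeries_eq_sup_closure_leftNormedCommutators (FreeGroup.closure_range_of α) n
  simp only [leftNormedCommutators] at key
  rw [Nat.add_sub_cancel, sup_assoc, ← key, eq_comm, sup_eq_right]
  exact (Subgroup.commutator_lowerCentralSeries_le _ 1).trans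
    (Subgroup.lowerCentralSeries_antitone _ (by omega))

/-- Let `F` be a free group on generators `x_j` and `s ≥ 5`.  Then
`H = [Γ^{s-2}F, Γ²F] ⬝ Γ^{s+1}F` is a normal subgroup of `Γ^sF`, and the quotient
`Γ^sF / H` is generated by the images of the `s`-fold left-normed commutators
`[…[[x_{ℓ₁},x_{ℓ₂}],x_{ℓ₃}],…,x_{ℓ_s}]`: equivalently, `Γ^sF` is generated by `H`
together with the `s`-fold left-normed commutators of generators.
Here `Γ^i F = lowerCentralSeries F (i-1)`. -/
theorem gamma_s_generated_by_lnc (α : Type) (s : ℕ) (hs : 5 ≤ s) :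
    (((⁅(⊤ : Subgroup (FreeGroup α)).lowerCentralSeries (s - 3), (⊤ : Subgroup (FreeGroup α)).lowerCentralSeries 1⁆ ⊔
        (⊤ : Subgroup (FreeGroup α)).lowerCentralSeries s).subgroupOf
          ((⊤ : Subgroup (FreeGroup α)).lowerCentralSeries (s - 1))).Normal) ∧
    (⊤ : Subgroup (FreeGroup α)).lowerCentralSeries (s - 1) =
      (⁅(⊤ : Subgroup (FreeGroup α)).lowerCentralSeries (s - 3), (⊤ : Subgroup (FreeGroup α)).lowerCentralSeries 1⁆ ⊔
        (⊤ : Subgroup (FreeGroup α)).lowerCentralSeries s) ⊔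
      Subgroup.closure
        {c : FreeGroup α | ∃ ℓ : Fin s → α,
          c = lnc (List.ofFn fun i => FreeGroup.of (ℓ i))} :=
  gamma_s_generated_by_lnc_general α s
end
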